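/- arXiv:1407.4293 — 6 statements merged into one kernel-verified Lean document; each statement's English description precedes it below -/
import Mathlib

section
/- If A is an Order-Regular matrix with m rows and n columns, then m ≤ 2^(n-1) + 1. -/
/-- Successor row index, saturating at the last row (convention `A[m+1] = A[m]`). -/
def rowSucc {m : ℕ} (i : Fin m) : Fin m :=
  if h : i.1 + 1 < m then ⟨i.1 + 1, h⟩ else i

/-- The matrix `A` satisfies the Order-Regularity constraint for the pair of rows `(i, j)`:
there is a column `k` with `A[i,k] ≠ A[i+1,k] = A[j,k] = A[j+1,k]`. -/
def SatCon {m n : ℕ} (A : Fin m → Fin n → Bool) (i j : Fin m) : Prop :=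
  ∃ k : Fin n, A i k ≠ A (rowSucc i) k ∧ A (rowSucc i) k = A j k ∧ A j k = A (rowSucc j) k

/-- Order-Regularity: every pair of rows `i < j` satisfies the constraint, and the last two
rows are distinct. -/
def OrderRegular {m n : ℕ} (A : Fin m → Fin n → Bool) : Prop :=
  (∀ i j : Fin m, i < j → SatCon A i j) ∧
  ∀ _h : 2 ≤ m, A ⟨m - 2, by omega⟩ ≠ A ⟨m - 1, by omega⟩

theorem stmt0 {m n : ℕ} (A : Fin m → Fin n → Bool) (hA : OrderRegular A) :
    m ≤ 2 ^ (n - 1) + 1 := by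
  rcases le_or_gt m 1 with hm | hm
  · have h1 : 1 ≤ 2 ^ (n - 1) := Nat.one_le_two_pow
    omega
  rcases Nat.eq_zero_or_pos n with hn | hn
  · exfalso
    obtain ⟨k, -⟩ := hA.1 ⟨0, by omega⟩ ⟨1, by omega⟩ (by simp [Fin.lt_def])
    exact absurd k.2 (by omega)
  -- rows are pairwise distinct
  have distinct : ∀ p q : Fin m, p < q → A p ≠ A q := by
    intro p q hpq heq
    obtain ⟨k, h1, h2, -⟩ := hA.1 p q hpq
    exact h1 ((congrFun heq k).trans h2.symm)
  -- rows with index ≥ 1 are pairwise non-complementary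
  have ncompl : ∀ p q : Fin m, 0 < p.1 → p < q → ¬ (∀ k, A p k = ! A q k) := by
    intro p q hp hpq hc
    have hpm : p.1 < m := p.2
    have hpq' : p.1 < q.1 := hpq
    obtain ⟨k, h1, h2, -⟩ :=
      hA.1 ⟨p.1 - 1, by omega⟩ q (show p.1 - 1 < q.1 by omega)
    have hrs : rowSucc (⟨p.1 - 1, by omega⟩ : Fin m) = p := by
      simp only [rowSucc]
      rw [dif_pos (show p.1 - 1 + 1 < m by omega)]
      exact Fin.ext (show p.1 - 1 + 1 = p.1 by omega)
    rw [hrs] at h2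
    have hck := hc k
    rw [h2] at hck
    exact (Bool.eq_not_self (A q k)).mp hck
  -- the injection
  set f : Fin (m - 1) → Fin n → Bool := fun i =>
    if A ⟨i.1 + 1, by omega⟩ ⟨0, hn⟩ = true then (fun k => ! A ⟨i.1 + 1, by omega⟩ k)
    else A ⟨i.1 + 1, by omega⟩ with hf
  have hf0 : ∀ i, f i ⟨0, hn⟩ = false := by
    intro i
    by_cases h : A ⟨i.1 + 1, by omega⟩ ⟨0, hn⟩ = true
    · simp only [hf, if_pos h, h, Bool.not_true]
    · simp only [hf, if_neg h]
      simpa using h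
  set g : Fin (m - 1) → Fin (n - 1) → Bool := fun i k => f i ⟨k.1 + 1, by omega⟩ with hg
  have ginj : Function.Injective g := by
    intro i j hij
    by_contra hne
    -- first, f i = f j
    have hfeq : f i = f j := by
      funext k
      rcases Nat.eq_zero_or_pos k.1 with hk | hk
      · have hk0 : k = ⟨0, hn⟩ := Fin.ext hk
        rw [hk0, hf0, hf0]
      · have hkn : k.1 < n := k.2
        have hk2 : k.1 - 1 < n - 1 := by omega
        have hcf := congrFun hij ⟨k.1 - 1, hk2⟩
        simp only [hg] at hcf
        have hkk : (⟨(⟨k.1 - 1, hk2⟩ : Fin (n-1)).1 + 1, by omega⟩ : Fin n) = k :=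
          Fin.ext (show k.1 - 1 + 1 = k.1 by omega)
        rwa [hkk] at hcf
    -- now case on the two ifs
    have key : ∀ p q : Fin m, 0 < p.1 → 0 < q.1 → p < q →
        (if A p ⟨0, hn⟩ = true then (fun k => ! A p k) else A p) =
        (if A q ⟨0, hn⟩ = true then (fun k => ! A q k) else A q) → False := by
      intro p q hp hq hlt heq
      by_cases h1 : A p ⟨0, hn⟩ = true <;> by_cases h2 : A q ⟨0, hn⟩ = true
      · rw [if_pos h1, if_pos h2] at heq
        exact distinct p q hlt (funext fun k => Bool.not_inj (congrFun heq k))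
      · rw [if_pos h1, if_neg h2] at heq
        refine ncompl p q hp hlt fun k => ?_
        have := congrFun heq k
        rw [← this]; simp
      · rw [if_neg h1, if_pos h2] at heq
        exact ncompl p q hp hlt fun k => congrFun heq k
      · rw [if_neg h1, if_neg h2] at heq
        exact distinct p q hlt heq
    have him : i.1 + 1 < m := by omega
    have hjm : j.1 + 1 < m := by omega
    have hvne : i.1 ≠ j.1 := fun h => hne (Fin.ext h)
    simp only [hf] at hfeq
    rcases lt_or_gt_of_ne hvne with hlt | hgt
    · exact key ⟨i.1 + 1, him⟩ ⟨j.1 + 1, hjm⟩ (Nat.succ_pos _) (Nat.succ_pos _)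
        (show i.1 + 1 < j.1 + 1 by omega) hfeq
    · exact key ⟨j.1 + 1, hjm⟩ ⟨i.1 + 1, him⟩ (Nat.succ_pos _) (Nat.succ_pos _)
        (show j.1 + 1 < i.1 + 1 by omega) hfeq.symm
  have hcard := Fintype.card_le_of_injective g ginj
  have hc1 : Fintype.card (Fin (m - 1)) = m - 1 := Fintype.card_fin _
  have hc2 : Fintype.card (Fin (n - 1) → Bool) = 2 ^ (n - 1) := by
    simp [Fintype.card_fun]
  rw [hc1, hc2] at hcard
  omega
end

section
/- If A is a matrix satisfying the relaxed Order-Regularity condition (for all 1 ≤ i < j ≤ m there exists k with A[i,k] ≠ A[i+1,k] = A[j,k]), then A never contains both a row r and its entrywise negation unless one of the two is the first row; consequently m ≤ 2^(n-1) + 1. -/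
/-- The relaxed Order-Regularity condition: for all `i < j` there is a column `k`
with `A[i,k] ≠ A[i+1,k] = A[j,k]`. -/
def RelaxedOR {m n : ℕ} (A : Fin m → Fin n → Bool) : Prop :=
  ∀ i j : Fin m, i < j → ∃ k : Fin n, A i k ≠ A (rowSucc i) k ∧ A (rowSucc i) k = A j k

lemma neg_rows_aux {m n : ℕ} (A : Fin m → Fin n → Bool) (hA : RelaxedOR A) :
    ∀ i j : Fin m, (∀ k, A i k = !(A j k)) → i.1 = 0 ∨ j.1 = 0 := by
  intro i j hij
  by_contra hc
  push_neg at hc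
  obtain ⟨hi, hj⟩ := hc
  rcases lt_trichotomy i j with h | h | h
  · have hi1 : (⟨i.1 - 1, by omega⟩ : Fin m) < j := by
      simp only [Fin.lt_def]; omega
    obtain ⟨k, h1, h2⟩ := hA ⟨i.1 - 1, by omega⟩ j hi1
    have hs : rowSucc (⟨i.1 - 1, by omega⟩ : Fin m) = i := by
      simp only [rowSucc]
      rw [dif_pos (by omega)]
      ext; simp; omega
    rw [hs] at h2
    have := hij k
    rw [h2] at this
    simp at this
  · obtain ⟨k, h1, h2⟩ := hA ⟨0, by omega⟩ i (by simp [Fin.lt_def]; omega)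
    have := hij k
    rw [h] at this
    simp at this
  · have hj1 : (⟨j.1 - 1, by omega⟩ : Fin m) < i := by
      simp only [Fin.lt_def]; omega
    obtain ⟨k, h1, h2⟩ := hA ⟨j.1 - 1, by omega⟩ i hj1
    have hs : rowSucc (⟨j.1 - 1, by omega⟩ : Fin m) = j := by
      simp only [rowSucc]
      rw [dif_pos (by omega)]
      ext; simp; omega
    rw [hs] at h2
    have := hij k
    rw [h2] at this
    simp at this

theorem stmt1 {m n : ℕ} (A : Fin m → Fin n → Bool) (hA : RelaxedOR A) :
    (∀ i j : Fin m, (∀ k, A i k = !(A j k)) → i.1 = 0 ∨ j.1 = 0) ∧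
    m ≤ 2 ^ (n - 1) + 1 := by
  refine ⟨neg_rows_aux A hA, ?_⟩
  rcases Nat.lt_or_ge m 2 with hm | hm
  · have : 1 ≤ 2 ^ (n - 1) := Nat.one_le_two_pow
    omega
  -- m ≥ 2, so n ≥ 1
  have hn : 1 ≤ n := by
    obtain ⟨k, -⟩ := hA ⟨0, by omega⟩ ⟨1, by omega⟩ (by simp [Fin.lt_def])
    exact k.pos
  -- distinct rows
  have hdist : ∀ i j : Fin m, i < j → A i ≠ A j := by
    intro i j h heq
    obtain ⟨k, h1, h2⟩ := hA i j h
    rw [heq] at h1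
    exact h1 h2.symm
  -- normalized row
  set B : Fin m → Fin n → Bool := fun i k =>
    if A i ⟨0, by omega⟩ then !(A i k) else A i k with hB
  have hB0 : ∀ i, B i ⟨0, by omega⟩ = false := by
    intro i; simp only [hB]; split <;> simp_all
  have hBeq : ∀ i j : Fin m, B i = B j → A i = A j ∨ (∀ k, A i k = !(A j k)) := by
    intro i j h
    simp only [hB] at h
    by_cases hi : A i ⟨0, by omega⟩ = true <;> by_cases hj : A j ⟨0, by omega⟩ = true
    · left; funext k
      have := congrFun h k
      simp [hi, hj] at this
      exact this
    · right; intro k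
      have := congrFun h k
      simp [hi, hj] at this
      simp [this]
    · right; intro k
      have := congrFun h k
      simp [hi, hj] at this
      simp [this]
    · left; funext k
      have := congrFun h k
      simp [hi, hj] at this
      exact this
  -- injection Fin (m-1) → (Fin (n-1) → Bool)
  set g : Fin (m - 1) → (Fin (n - 1) → Bool) := fun i k =>
    B ⟨i.1 + 1, by omega⟩ ⟨k.1 + 1, by omega⟩ with hg
  have hginj : Function.Injective g := by
    intro a b hab
    have hBab : B ⟨a.1 + 1, by omega⟩ = B ⟨b.1 + 1, by omega⟩ := by
      funext k
      rcases Nat.eq_zero_or_pos k.1 with hk | hk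
      · have : k = ⟨0, by omega⟩ := by ext; exact hk
        rw [this, hB0, hB0]
      · have := congrFun hab ⟨k.1 - 1, by omega⟩
        simp only [hg] at this
        convert this using 3 <;> omega
    rcases hBeq _ _ hBab with h | h
    · by_contra hne
      rcases Nat.lt_or_ge a.1 b.1 with hlt | hge
      · exact hdist _ _ (Fin.mk_lt_mk.mpr (by omega)) h
      · have : b.1 < a.1 := by
          rcases Nat.lt_or_ge b.1 a.1 with h' | h'
          · exact h'
          · exact absurd (Fin.ext (by omega)) hne
        exact hdist _ _ (Fin.mk_lt_mk.mpr (by omega)) h.symm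
    · rcases neg_rows_aux A hA _ _ h with h0 | h0 <;> simp at h0
  have := Fintype.card_le_of_injective g hginj
  simp [Fintype.card_fun] at this
  omega
end

section
/- Let A be an Order-Regular matrix with m rows, let à be obtained from A by negating some of its columns so that the first row of à equals the last row of A, and let A' be the M-gluing of A (the vertical concatenation of M alternating copies of A and Ã, starting and ending with A). Then every constraint (i,j) with (s-1)·m < i < j ≤ s·m for some integer 1 ≤ s ≤ M is satisfied by A', i.e., there exists a column k such that A'[i,k] ≠ A'[i+1,k] = A'[j,k] = A'[j+1,k]. -/
/-- The `M`-gluing of `A` and `Ã`: vertical concatenation of `M` alternating copies of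
`A` and `Ã`, starting with `A`. -/
def glueMat (M : ℕ) {m n : ℕ} (hm : 0 < m) (A Atil : Fin m → Fin n → Bool) :
    Fin (M * m) → Fin n → Bool :=
  fun i k =>
    if (i.1 / m) % 2 = 0 then A ⟨i.1 % m, Nat.mod_lt _ hm⟩ k
    else Atil ⟨i.1 % m, Nat.mod_lt _ hm⟩ k

lemma glue_val {M m n : ℕ} (hm : 0 < m) (A Atil : Fin m → Fin n → Bool)
    (i : Fin (M * m)) (k : Fin n) (q r : ℕ) (hr : r < m) (hi : i.1 = m * q + r) :
    glueMat M hm A Atil i k =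
      if q % 2 = 0 then A ⟨r, hr⟩ k else Atil ⟨r, hr⟩ k := by
  have hdiv : i.1 / m = q := by
    rw [hi, Nat.mul_add_div hm, Nat.div_eq_of_lt hr]
    omega
  have hmod : i.1 % m = r := by
    rw [hi, Nat.mul_add_mod, Nat.mod_eq_of_lt hr]
  simp [glueMat, hdiv, hmod]

theorem stmt4 {M m n : ℕ} (hm : 0 < m) (A : Fin m → Fin n → Bool) (s : Fin n → Bool)
    (hA : OrderRegular A)
    -- `Ã` is obtained from `A` by negating the columns selected by `s`, and its first
    -- row equals the last row of `A`:
    (hfirst : ∀ k, xor (s k) (A ⟨0, hm⟩ k) = A ⟨m - 1, by omega⟩ k) :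
    ∀ i j : Fin (M * m), i < j → i.1 / m = j.1 / m →
      SatCon (glueMat M hm A (fun i k => xor (s k) (A i k))) i j := by
  intro i j hij hq
  obtain ⟨b, ri, rj, hri, hrj, hi, hj⟩ :
      ∃ b ri rj, ri < m ∧ rj < m ∧ i.1 = m * b + ri ∧ j.1 = m * b + rj :=
    ⟨i.1 / m, i.1 % m, j.1 % m, Nat.mod_lt _ hm, Nat.mod_lt _ hm,
      (Nat.div_add_mod i.1 m).symm, by rw [hq]; exact (Nat.div_add_mod j.1 m).symm⟩
  have hijlt : i.1 < j.1 := hij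
  have hrij : ri < rj := by omega
  have hjM : j.1 < M * m := j.2
  have hmul1 : m * b + m = m * (b + 1) := by ring
  have hmM : m * M = M * m := Nat.mul_comm _ _
  have hbM : b < M := by
    rcases Nat.lt_or_ge b M with h | h
    · exact h
    · exfalso
      have : m * M ≤ m * b := Nat.mul_le_mul_left m h
      omega
  have hbM' : m * (b + 1) ≤ m * M := Nat.mul_le_mul_left m hbM
  obtain ⟨k, h1, h2, h3⟩ := hA.1 ⟨ri, hri⟩ ⟨rj, hrj⟩ hrij
  set c : Bool := if b % 2 = 0 then false else s k with hc
  refine ⟨k, ?_⟩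
  have eval : ∀ (x : Fin m),
      (if b % 2 = 0 then A x k else xor (s k) (A x k)) = xor c (A x k) := by
    intro x
    by_cases h : b % 2 = 0 <;> simp [hc, h]
  have e1 : glueMat M hm A (fun i k => xor (s k) (A i k)) i k = xor c (A ⟨ri, hri⟩ k) := by
    rw [glue_val hm _ _ i k b ri hri hi]; exact eval _
  have hri1 : ri + 1 < m := by omega
  have hisucc : (rowSucc i).1 = i.1 + 1 := by
    have : i.1 + 1 < M * m := by omega
    simp [rowSucc, this]
  have hisucc' : rowSucc ⟨ri, hri⟩ = (⟨ri + 1, hri1⟩ : Fin m) := by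
    simp [rowSucc, hri1]
  have e2 : glueMat M hm A (fun i k => xor (s k) (A i k)) (rowSucc i) k
      = xor c (A (rowSucc ⟨ri, hri⟩) k) := by
    rw [glue_val hm _ _ (rowSucc i) k b (ri + 1) hri1 (by omega), hisucc']
    exact eval _
  have e3 : glueMat M hm A (fun i k => xor (s k) (A i k)) j k = xor c (A ⟨rj, hrj⟩ k) := by
    rw [glue_val hm _ _ j k b rj hrj hj]; exact eval _
  have e4 : glueMat M hm A (fun i k => xor (s k) (A i k)) (rowSucc j) k
      = xor c (A (rowSucc ⟨rj, hrj⟩) k) := by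
    by_cases hrj1 : rj + 1 < m
    · have hjlt : j.1 + 1 < M * m := by omega
      have hjsucc : (rowSucc j).1 = j.1 + 1 := by simp [rowSucc, hjlt]
      have hjsucc' : rowSucc ⟨rj, hrj⟩ = (⟨rj + 1, hrj1⟩ : Fin m) := by
        simp [rowSucc, hrj1]
      rw [glue_val hm _ _ (rowSucc j) k b (rj + 1) hrj1 (by omega), hjsucc']
      exact eval _
    · have hrjm : rj = m - 1 := by omega
      have hjsucc' : rowSucc ⟨rj, hrj⟩ = (⟨rj, hrj⟩ : Fin m) := by
        simp [rowSucc, hrj1]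
      rw [hjsucc']
      by_cases hbM1 : b + 1 < M
      · have hlt : m * (b + 1) < m * M := (Nat.mul_lt_mul_left hm).mpr hbM1
        have hjlt : j.1 + 1 < M * m := by omega
        have hjsucc : (rowSucc j).1 = j.1 + 1 := by simp [rowSucc, hjlt]
        rw [glue_val hm _ _ (rowSucc j) k (b + 1) 0 hm (by omega)]
        have hj'eq : A ⟨rj, hrj⟩ k = A ⟨m - 1, by omega⟩ k := by
          congr 1
          exact Fin.ext hrjm
        have hA0 : xor (s k) (A ⟨m - 1, by omega⟩ k) = A ⟨0, hm⟩ k := by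
          rw [← hfirst k]; cases s k <;> simp
        by_cases hbe : b % 2 = 0
        · have hb1 : ¬ (b + 1) % 2 = 0 := by omega
          rw [if_neg hb1, hj'eq]
          rw [hfirst k]
          simp [hc, hbe]
        · have hb1 : (b + 1) % 2 = 0 := by omega
          rw [if_pos hb1, hj'eq, ← hA0]
          simp [hc, hbe]
      · have hMe : b + 1 = M := by omega
        have hMe' : m * (b + 1) = m * M := by rw [hMe]
        have : ¬ (j.1 + 1 < M * m) := by omega
        have hrs : rowSucc j = j := by simp [rowSucc, this]
        rw [hrs, e3]
  rw [e1, e2, e3, e4]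
  have hinj : ∀ a b : Bool, xor c a = xor c b ↔ a = b := by
    intro a b; cases c <;> cases a <;> cases b <;> simp
  exact ⟨fun h => h1 ((hinj _ _).1 h), (hinj _ _).2 h2, (hinj _ _).2 h3⟩
end

section
/- The matrices A^(ℓ) obtained from the recursive construction (A^(1) = [0;1], and A^(ℓ) formed by stacking A^(ℓ-1) extended with two columns of alternating patterns {0,1} and {0,1} on top of Ã^(ℓ-1) extended with columns {1,1} and {0,0}, all patterns of size 2^(ℓ-1)) are Order-Regular, with n_ℓ = 2ℓ-1 columns and m_ℓ = 2^ℓ rows; hence there exist Order-Regular matrices with m = Ω(√2^n) rows. -/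
/-- The recursive construction: `A^(1) = [0;1]`, and `A^(ℓ)` stacks `A^(ℓ-1)` (extended by
two alternating `{0,1}` columns) on top of `Ã^(ℓ-1)` (extended by a `{1,1}` column and a
`{0,0}` column).  Value of the entry in row `i`, column `k` (0-indexed) of `A^(ℓ)`. -/
def simpleCon : ℕ → ℕ → ℕ → Bool
  | 0, _, _ => false
  | 1, i, _ => decide (i = 1)
  | ℓ + 2, i, k =>
    let g := simpleCon (ℓ + 1)
    let half := 2 ^ (ℓ + 1)
    let nc := 2 * (ℓ + 1) - 1
    if i < half then
      if k < nc then g i k else decide (i % 2 = 1)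
    else
      if k < nc then
        -- `Ã^(ℓ-1)`: negate the columns where the first and last rows of `A^(ℓ-1)` differ
        (if g 0 k = g (half - 1) k then g (i - half) k else !(g (i - half) k))
      else if k = nc then true
      else false

def succN (m x : ℕ) : ℕ := if x + 1 < m then x + 1 else x

lemma rowSucc_val {m : ℕ} (i : Fin m) : (rowSucc i).1 = succN m i.1 := by
  unfold rowSucc succN; split <;> rfl

lemma succN_ge (m x : ℕ) : x ≤ succN m x := by unfold succN; split <;> omega

lemma succN_lt {m x : ℕ} (h : x + 1 < m) : succN m x = x + 1 := if_pos h

lemma succN_last {m x : ℕ} (h : ¬ x + 1 < m) : succN m x = x := if_neg h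

lemma succN_shift (h i : ℕ) (hi : h ≤ i) : succN (2*h) i = h + succN h (i - h) := by
  unfold succN; split <;> split <;> omega

def tw (ℓ k : ℕ) (b : Bool) : Bool :=
  if simpleCon (ℓ+1) 0 k = simpleCon (ℓ+1) (2^(ℓ+1) - 1) k then b else !b

lemma tw_eq_iff (ℓ k : ℕ) (a b : Bool) : (tw ℓ k a = tw ℓ k b) ↔ a = b := by
  unfold tw; split <;> simp

lemma tw_glue (ℓ k : ℕ) : tw ℓ k (simpleCon (ℓ+1) 0 k) = simpleCon (ℓ+1) (2^(ℓ+1) - 1) k := by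
  unfold tw; split
  · assumption
  · rename_i h
    cases ha : simpleCon (ℓ+1) 0 k <;> cases hb : simpleCon (ℓ+1) (2^(ℓ+1) - 1) k <;>
      simp_all

lemma sc_top (ℓ i k : ℕ) (hi : i < 2^(ℓ+1)) (hk : k < 2*(ℓ+1)-1) :
    simpleCon (ℓ+2) i k = simpleCon (ℓ+1) i k := by
  simp [simpleCon, hi, hk]

lemma sc_topNew (ℓ i k : ℕ) (hi : i < 2^(ℓ+1)) (hk : 2*(ℓ+1)-1 ≤ k) :
    simpleCon (ℓ+2) i k = decide (i % 2 = 1) := by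
  simp [simpleCon, hi, Nat.not_lt.2 hk]

lemma sc_bot (ℓ i k : ℕ) (hi : 2^(ℓ+1) ≤ i) (hk : k < 2*(ℓ+1)-1) :
    simpleCon (ℓ+2) i k = tw ℓ k (simpleCon (ℓ+1) (i - 2^(ℓ+1)) k) := by
  simp [simpleCon, Nat.not_lt.2 hi, hk, tw]

lemma sc_bot_nc (ℓ i : ℕ) (hi : 2^(ℓ+1) ≤ i) :
    simpleCon (ℓ+2) i (2*(ℓ+1)-1) = true := by
  simp [simpleCon, Nat.not_lt.2 hi]

lemma sc_bot_nc1 (ℓ i : ℕ) (hi : 2^(ℓ+1) ≤ i) :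
    simpleCon (ℓ+2) i (2*(ℓ+1)) = false := by
  have h1 : ¬ (2*(ℓ+1) < 2*(ℓ+1)-1) := by omega
  have h2 : ¬ (2*(ℓ+1) = 2*(ℓ+1)-1) := by omega
  simp [simpleCon, Nat.not_lt.2 hi, h1, h2]

lemma sc_glue (ℓ k : ℕ) (hk : k < 2*(ℓ+1)-1) :
    simpleCon (ℓ+2) (2^(ℓ+1)) k = simpleCon (ℓ+1) (2^(ℓ+1) - 1) k := by
  rw [sc_bot ℓ _ k le_rfl hk, Nat.sub_self]
  exact tw_glue ℓ k

lemma key : ∀ ℓ : ℕ, 1 ≤ ℓ →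
    (∀ i j : ℕ, i < j → j < 2^ℓ → ∃ k, k < 2*ℓ-1 ∧
      simpleCon ℓ i k ≠ simpleCon ℓ (succN (2^ℓ) i) k ∧
      simpleCon ℓ (succN (2^ℓ) i) k = simpleCon ℓ j k ∧
      simpleCon ℓ j k = simpleCon ℓ (succN (2^ℓ) j) k) ∧
    (∃ k, k < 2*ℓ-1 ∧ simpleCon ℓ (2^ℓ-2) k ≠ simpleCon ℓ (2^ℓ-1) k)
  | 0, h => absurd h (by norm_num)
  | 1, _ => by
      constructor
      · intro i j hij hj
        have hij' : i = 0 ∧ j = 1 := by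
          have : (2:ℕ)^1 = 2 := by norm_num
          omega
        obtain ⟨hi0, hj1⟩ := hij'
        subst hi0; subst hj1
        exact ⟨0, by norm_num, by decide⟩
      · exact ⟨0, by norm_num, by decide⟩
  | (ℓ+2), _ => by
      obtain ⟨IH1, IH2⟩ := key (ℓ+1) (by omega)
      have hH : 2 ≤ 2^(ℓ+1) := by
        calc (2:ℕ) = 2^1 := by norm_num
        _ ≤ 2^(ℓ+1) := Nat.pow_le_pow_right (by norm_num) (by omega)
      have hM : 2^(ℓ+2) = 2 * 2^(ℓ+1) := by ring
      constructor
      · intro i j hij hj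
        rw [hM] at hj
        by_cases hjtop : j < 2^(ℓ+1)
        · -- both rows in the top block
          have hi : i < 2^(ℓ+1) := lt_trans hij hjtop
          obtain ⟨k, hk, c1, c2, c3⟩ := IH1 i j hij hjtop
          have hsi : succN (2^(ℓ+2)) i = i + 1 := succN_lt (by omega)
          have hsi' : succN (2^(ℓ+1)) i = i + 1 := succN_lt (by omega)
          rw [hsi'] at c1 c2
          refine ⟨k, by omega, ?_, ?_, ?_⟩
          · rw [hsi, sc_top ℓ i k hi hk, sc_top ℓ (i+1) k (by omega) hk]; exact c1
          · rw [hsi, sc_top ℓ (i+1) k (by omega) hk, sc_top ℓ j k hjtop hk]; exact c2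
          · by_cases hjl : j + 1 < 2^(ℓ+1)
            · have : succN (2^(ℓ+2)) j = j + 1 := succN_lt (by omega)
              rw [this, sc_top ℓ j k hjtop hk, sc_top ℓ (j+1) k hjl hk,
                ← succN_lt hjl]; exact c3
            · -- j = 2^(ℓ+1) - 1 : succN in big matrix goes to row 2^(ℓ+1)
              have hj1 : j = 2^(ℓ+1) - 1 := by omega
              have : succN (2^(ℓ+2)) j = j + 1 := succN_lt (by omega)
              rw [this, sc_top ℓ j k hjtop hk]
              have : j + 1 = 2^(ℓ+1) := by omega
              rw [this, sc_glue ℓ k hk, ← hj1, ← succN_last hjl]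
        · -- both rows in the bottom block
          push_neg at hjtop
          by_cases hitop : i < 2^(ℓ+1)
          · -- mixed case: i in top, j in bottom
            have hsi : succN (2^(ℓ+2)) i = i + 1 := succN_lt (by omega)
            have hsj : 2^(ℓ+1) ≤ succN (2^(ℓ+2)) j := le_trans hjtop (succN_ge _ _)
            by_cases hpar : i % 2 = 1
            · -- odd i : use column nc+1 = 2*(ℓ+1)
              refine ⟨2*(ℓ+1), by omega, ?_, ?_, ?_⟩
              · rw [hsi, sc_topNew ℓ i _ hitop (by omega)]
                by_cases h1 : i + 1 < 2^(ℓ+1)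
                · rw [sc_topNew ℓ (i+1) _ h1 (by omega)]
                  simp [hpar] <;> omega
                · rw [sc_bot_nc1 ℓ (i+1) (by omega)]
                  simp [hpar]
              · rw [hsi, sc_bot_nc1 ℓ j hjtop]
                by_cases h1 : i + 1 < 2^(ℓ+1)
                · rw [sc_topNew ℓ (i+1) _ h1 (by omega)]
                  simp <;> omega
                · rw [sc_bot_nc1 ℓ (i+1) (by omega)]
              · rw [sc_bot_nc1 ℓ j hjtop, sc_bot_nc1 ℓ _ hsj]
            · -- even i : use column nc = 2*(ℓ+1)-1
              refine ⟨2*(ℓ+1)-1, by omega, ?_, ?_, ?_⟩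
              · rw [hsi, sc_topNew ℓ i _ hitop (by omega)]
                by_cases h1 : i + 1 < 2^(ℓ+1)
                · rw [sc_topNew ℓ (i+1) _ h1 (by omega)]
                  simp [hpar] <;> omega
                · rw [sc_bot_nc ℓ (i+1) (by omega)]
                  simp [hpar]
              · rw [hsi, sc_bot_nc ℓ j hjtop]
                by_cases h1 : i + 1 < 2^(ℓ+1)
                · rw [sc_topNew ℓ (i+1) _ h1 (by omega)]
                  simp <;> omega
                · rw [sc_bot_nc ℓ (i+1) (by omega)]
              · rw [sc_bot_nc ℓ j hjtop, sc_bot_nc ℓ _ hsj]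
          · -- i in bottom
            push_neg at hitop
            obtain ⟨k, hk, c1, c2, c3⟩ :=
              IH1 (i - 2^(ℓ+1)) (j - 2^(ℓ+1)) (by omega) (by omega)
            have hshifti : succN (2^(ℓ+2)) i = 2^(ℓ+1) + succN (2^(ℓ+1)) (i - 2^(ℓ+1)) := by
              rw [hM]; exact succN_shift _ i hitop
            have hshiftj : succN (2^(ℓ+2)) j = 2^(ℓ+1) + succN (2^(ℓ+1)) (j - 2^(ℓ+1)) := by
              rw [hM]; exact succN_shift _ j hjtop
            refine ⟨k, by omega, ?_, ?_, ?_⟩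
            · rw [hshifti, sc_bot ℓ i k hitop hk, sc_bot ℓ _ k (by omega) hk,
                Nat.add_sub_cancel_left]
              intro h; exact c1 ((tw_eq_iff ℓ k _ _).1 h)
            · rw [hshifti, sc_bot ℓ j k hjtop hk, sc_bot ℓ _ k (by omega) hk,
                Nat.add_sub_cancel_left, tw_eq_iff]
              exact c2
            · rw [hshiftj, sc_bot ℓ j k hjtop hk, sc_bot ℓ _ k (by omega) hk,
                Nat.add_sub_cancel_left, tw_eq_iff]
              exact c3
      · obtain ⟨k, hk, hne⟩ := IH2
        refine ⟨k, by omega, ?_⟩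
        rw [sc_bot ℓ _ k (by omega) hk, sc_bot ℓ _ k (by omega) hk]
        have e1 : 2^(ℓ+2) - 2 - 2^(ℓ+1) = 2^(ℓ+1) - 2 := by omega
        have e2 : 2^(ℓ+2) - 1 - 2^(ℓ+1) = 2^(ℓ+1) - 1 := by omega
        rw [e1, e2]
        intro h; exact hne ((tw_eq_iff ℓ k _ _).1 h)

lemma OR_of_key (ℓ n : ℕ) (hℓ : 1 ≤ ℓ) (hn : 2*ℓ-1 ≤ n)
    (A : Fin (2^ℓ) → Fin n → Bool)
    (hA : ∀ (i : Fin (2^ℓ)) (k : Fin n), k.1 < 2*ℓ-1 → A i k = simpleCon ℓ i.1 k.1) :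
    OrderRegular A := by
  obtain ⟨P1, P2⟩ := key ℓ hℓ
  constructor
  · intro i j hij
    obtain ⟨k, hk, c1, c2, c3⟩ := P1 i.1 j.1 hij j.2
    refine ⟨⟨k, lt_of_lt_of_le hk hn⟩, ?_, ?_, ?_⟩
    · rw [hA _ _ hk, hA _ _ hk, rowSucc_val]; exact c1
    · rw [hA _ _ hk, hA _ _ hk, rowSucc_val]; exact c2
    · rw [hA _ _ hk, hA _ _ hk, rowSucc_val]; exact c3
  · intro h2 hEq
    obtain ⟨k, hk, hne⟩ := P2
    have := congrFun hEq ⟨k, lt_of_lt_of_le hk hn⟩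
    rw [hA _ _ hk, hA _ _ hk] at this
    exact hne this

theorem stmt6 :
    (∀ ℓ : ℕ, 1 ≤ ℓ →
      OrderRegular (fun (i : Fin (2 ^ ℓ)) (k : Fin (2 * ℓ - 1)) => simpleCon ℓ i.1 k.1)) ∧
    (∀ n : ℕ, 1 ≤ n → ∃ (m : ℕ) (A : Fin m → Fin n → Bool),
      OrderRegular A ∧ Real.sqrt 2 ^ n ≤ (m : ℝ)) := by
  constructor
  · intro ℓ hℓ
    exact OR_of_key ℓ (2*ℓ-1) hℓ le_rfl _ (fun i k _ => rfl)
  · intro n hn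
    set ℓ := (n+1)/2 with hℓdef
    have h1 : 1 ≤ ℓ := by omega
    have h2 : 2*ℓ - 1 ≤ n := by omega
    have h3 : n ≤ 2*ℓ := by omega
    refine ⟨2^ℓ, fun i k => if k.1 < 2*ℓ-1 then simpleCon ℓ i.1 k.1 else false, ?_, ?_⟩
    · exact OR_of_key ℓ n h1 h2 _ (fun i k hk => by simp [hk])
    · have hs : (1:ℝ) ≤ Real.sqrt 2 := by
        rw [show (1:ℝ) = Real.sqrt 1 from (Real.sqrt_one).symm]
        exact Real.sqrt_le_sqrt (by norm_num)
      calc Real.sqrt 2 ^ n ≤ Real.sqrt 2 ^ (2*ℓ) := pow_le_pow_right₀ hs h3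
        _ = (Real.sqrt 2 ^ 2) ^ ℓ := by rw [pow_mul]
        _ = 2 ^ ℓ := by rw [Real.sq_sqrt (by norm_num : (0:ℝ) ≤ 2)]
        _ = ((2^ℓ : ℕ) : ℝ) := by push_cast; ring
end

section
/- There exists an Order-Regular matrix with m rows and n columns if and only if there exists an Order-Regular* matrix with m+1 rows and n columns. -/
/-- Order-Regularity*: the constraint is only required for pairs `i < j < m` (1-indexed),
so that row `j+1` always exists, and the last two rows may be equal. -/
def OrderRegularStar {m n : ℕ} (A : Fin m → Fin n → Bool) : Prop :=
  ∀ i j : ℕ, ∀ _hij : i < j, ∀ hj : j + 1 < m, ∃ k : Fin n,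
    A ⟨i, by omega⟩ k ≠ A ⟨i + 1, by omega⟩ k ∧
    A ⟨i + 1, by omega⟩ k = A ⟨j, by omega⟩ k ∧
    A ⟨j, by omega⟩ k = A ⟨j + 1, hj⟩ k

theorem stmt15 (m n : ℕ) :
    (∃ A : Fin m → Fin n → Bool, OrderRegular A) ↔
    (∃ A : Fin (m + 1) → Fin n → Bool, OrderRegularStar A) := by
  constructor
  · rintro ⟨A, hA⟩
    rcases Nat.eq_zero_or_pos m with hm | hm
    · subst hm
      exact ⟨fun _ _ => false, fun i j hij hj => by exfalso; omega⟩
    · refine ⟨fun i => if h : i.1 < m then A ⟨i.1, h⟩ else A ⟨m - 1, by omega⟩, ?_⟩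
      intro i j hij hj
      by_cases hjm : j + 1 < m
      · obtain ⟨k, h1, h2, h3⟩ := hA.1 ⟨i, by omega⟩ ⟨j, by omega⟩ (by simpa using hij)
        have hri : rowSucc (⟨i, by omega⟩ : Fin m) = ⟨i + 1, by omega⟩ := by
          simp [rowSucc, show i + 1 < m by omega]
        have hrj : rowSucc (⟨j, by omega⟩ : Fin m) = ⟨j + 1, by omega⟩ := by
          simp [rowSucc, hjm]
        rw [hri] at h1 h2; rw [hrj] at h3
        refine ⟨k, ?_, ?_, ?_⟩
        · simpa [dif_pos (show i < m by omega), dif_pos (show i + 1 < m by omega)] using h1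
        · simpa [dif_pos (show j < m by omega), dif_pos (show i + 1 < m by omega)] using h2
        · simpa [dif_pos (show j < m by omega), dif_pos hjm] using h3
      · have hj1 : j + 1 = m := by omega
        obtain ⟨k, h1, h2, h3⟩ := hA.1 ⟨i, by omega⟩ ⟨j, by omega⟩ (by simpa using hij)
        have hri : rowSucc (⟨i, by omega⟩ : Fin m) = ⟨i + 1, by omega⟩ := by
          simp [rowSucc, show i + 1 < m by omega]
        rw [hri] at h1 h2
        have e1 : (⟨m - 1, by omega⟩ : Fin m) = ⟨j, by omega⟩ := by
          rw [Fin.mk.injEq]; omega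
        refine ⟨k, ?_, ?_, ?_⟩
        · simpa [dif_pos (show i < m by omega), dif_pos (show i + 1 < m by omega)] using h1
        · simpa [dif_pos (show j < m by omega), dif_pos (show i + 1 < m by omega)] using h2
        · simp [dif_pos (show j < m by omega), dif_neg (show ¬ (j + 1 < m) from hjm), e1]
  · rintro ⟨B, hB⟩
    refine ⟨fun i => B ⟨i.1, by omega⟩, ?_, ?_⟩
    · rintro ⟨i, him⟩ ⟨j, hjm⟩ hij
      have hij' : i < j := hij
      have hri : rowSucc (⟨i, him⟩ : Fin m) = ⟨i + 1, by omega⟩ := by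
        simp [rowSucc, show i + 1 < m by omega]
      by_cases hj1 : j + 1 < m
      · obtain ⟨k, h1, h2, h3⟩ := hB i j hij' (by omega)
        have hrj : rowSucc (⟨j, hjm⟩ : Fin m) = ⟨j + 1, hj1⟩ := by
          simp [rowSucc, hj1]
        exact ⟨k, by rw [hri]; exact h1, by rw [hri]; exact h2, by rw [hrj]; exact h3⟩
      · obtain ⟨k, h1, h2, h3⟩ := hB i j hij' (by omega)
        have hrj : rowSucc (⟨j, hjm⟩ : Fin m) = ⟨j, hjm⟩ := by
          simp [rowSucc, hj1]
        exact ⟨k, by rw [hri]; exact h1, by rw [hri]; exact h2, by rw [hrj]⟩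
    · intro h2 heq
      obtain ⟨k, h1, -, -⟩ := hB (m - 2) (m - 1) (by omega) (by omega)
      have e : (⟨m - 2 + 1, by omega⟩ : Fin (m + 1)) = ⟨m - 1, by omega⟩ := by
        rw [Fin.mk.injEq]; omega
      rw [e] at h1
      exact h1 (congrFun heq k)
end

section
/- Let A be a d×n Order-Regular* matrix, R_A the set of rows appearing as a first entry of a compatible pair of A, and m* = d + |R_A|. Then there exists no Order-Regular* matrix with more than m*+1 rows whose first d rows equal A. -/
def compatPair {d n : ℕ} (A : Fin d → Fin n → Bool) (r q : Fin n → Bool) : Prop :=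
  ∀ i : ℕ, ∀ h : i + 1 < d, ∃ k : Fin n,
    A ⟨i, by omega⟩ k ≠ A ⟨i + 1, h⟩ k ∧ A ⟨i + 1, h⟩ k = r k ∧ r k = q k

theorem stmt17 {d n : ℕ} (A : Fin d → Fin n → Bool) (hA : OrderRegularStar A) :
    ∀ m : ℕ,
      ∀ hm : d + Set.ncard {r : Fin n → Bool | ∃ q, compatPair A r q} + 1 < m,
      ∀ B : Fin m → Fin n → Bool, OrderRegularStar B →
        (∀ i : ℕ, ∀ h : i < d, B ⟨i, by omega⟩ = A ⟨i, h⟩) → False := by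
  intro m hm B hB hBA
  set S : Set (Fin n → Bool) := {r | ∃ q, compatPair A r q} with hSdef
  set t : ℕ := m - 1 - d with ht
  -- the map from the new rows (except the last) into S
  have hf1 : ∀ j : Fin t, d + j.1 + 1 < m := by
    intro j; have := j.2; omega
  let f : Fin t → (Fin n → Bool) := fun j => B ⟨d + j.1, by omega⟩
  have hinj : Function.Injective f := by
    intro j1 j2 hj
    by_contra hne
    rcases lt_or_gt_of_ne (fun h : j1 = j2 => hne h) with h | h
    · obtain ⟨k, h1, h2, _⟩ := hB (d + j1.1) (d + j2.1) (by omega) (by have := hf1 j2; omega)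
      have : B ⟨d + j1.1, by omega⟩ k = B ⟨d + j2.1, by omega⟩ k := congrFun hj k
      exact h1 (this.trans h2.symm) |>.elim
    · obtain ⟨k, h1, h2, _⟩ := hB (d + j2.1) (d + j1.1) (by omega) (by have := hf1 j1; omega)
      have : B ⟨d + j2.1, by omega⟩ k = B ⟨d + j1.1, by omega⟩ k := congrFun hj.symm k
      exact h1 (this.trans h2.symm) |>.elim
  have hmem : ∀ j : Fin t, f j ∈ S := by
    intro j
    refine ⟨B ⟨d + j.1 + 1, hf1 j⟩, ?_⟩
    intro i hi
    obtain ⟨k, h1, h2, h3⟩ := hB i (d + j.1) (by omega) (hf1 j)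
    refine ⟨k, ?_, ?_, h3⟩
    · rw [← hBA i (by omega), ← hBA (i + 1) hi]; exact h1
    · rw [← hBA (i + 1) hi]; exact h2
  have hS : S.Finite := Set.toFinite _
  have hsub : Set.range f ⊆ S := by rintro x ⟨j, rfl⟩; exact hmem j
  have h1 : (Set.range f).ncard ≤ S.ncard := Set.ncard_le_ncard hsub hS
  have h2 : (Set.range f).ncard = t := by
    rw [← Set.image_univ, Set.ncard_image_of_injective _ hinj, Set.ncard_univ]; simp
  omega
end
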